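/- arXiv:2408.05826 — 5 statements merged into one kernel-verified Lean document; each statement's English description precedes it below -/
import Mathlib

section
/- Let N, m ≥ 1 and let P be a probability measure on Fin m → ℝ such that for every s ⊆ {1,…,m} the function x ↦ ∏_{j∈s} x_j is P-integrable. Then for every π ∈ Π(m): ∫ ∏_{p∈π} ( N⁻¹ Σ_{i : Fin N} ∏_{j∈p} Y_{i,j} ) dP^{⊗N}(Y) = Σ_{σ ∈ Π(m), σ ≥ π} ( N^{(#σ)} / N^{#π} ) · μ_σ(P), where the sum is over all coarsenings σ of π and N^{(k)} = N(N−1)⋯(N−k+1). (The integrand is the moment product μ_π of the empirical distribution of the N rows of Y.) -/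
/-!
Multiplying out the product of sums, the integrand is `N^{-#π}` times the sum, over all maps `f`
from the parts of `π` to the sample indices `Fin N`, of `∏ j, Y (f [j]) j`, where `[j]` is the part
of `π` containing `j`. Since the rows are i.i.d., the expectation of such a term is the moment
product of the partition `ker f` of `Fin m` into the fibres of `j ↦ f [j]`; this is a coarsening of
`π`. Conversely, for `σ ≥ π` the maps `f` with `ker f = σ` are exactly the injections of the parts
of `σ` into `Fin N`, precomposed with the map from parts of `π` to parts of `σ`, so there are
`N^{(#σ)}` of them.
-/

open Finset MeasureTheory
open scoped Classical

/-- The moment `μ_s(P) = ∫ ∏_{j ∈ s} x_j dP(x)` of a measure on `Fin m → ℝ`. -/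
noncomputable def moment {m : ℕ} (P : Measure (Fin m → ℝ)) (s : Finset (Fin m)) : ℝ :=
  ∫ x, ∏ j ∈ s, x j ∂P

/-- The moment product `μ_π(P) = ∏_{p ∈ π} μ_p(P)` associated with a partition `π`. -/
noncomputable def momentProd {m : ℕ} (P : Measure (Fin m → ℝ))
    (π : Finpartition (Finset.univ : Finset (Fin m))) : ℝ :=
  ∏ p ∈ π.parts, moment P p

lemma Finset.prod_fiberwise_eq_prod_apply {α ι M : Type*} [Fintype ι] [DecidableEq ι]
    [CommMonoid M] (s : Finset α) (g : α → ι) (f : ι → α → M) :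
    ∏ i, ∏ a ∈ s with g a = i, f i a = ∏ a ∈ s, f (g a) a := by
  rw [← prod_fiberwise s g fun a => f (g a) a]
  exact prod_congr rfl fun i _ => prod_congr rfl fun a ha => by rw [(mem_filter.1 ha).2]

namespace Finpartition

variable {α ι : Type*} [Fintype α] [DecidableEq α]

lemma part_eq_part_iff_mem {P : Finpartition (univ : Finset α)} {a b : α} :
    P.part a = P.part b ↔ b ∈ P.part a :=
  eq_comm.trans (P.mem_part_iff_part_eq_part (mem_univ b) (mem_univ a)).symm

lemma le_iff_part_eq_part_imp {P Q : Finpartition (univ : Finset α)} :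
    P ≤ Q ↔ ∀ a b, P.part a = P.part b → Q.part a = Q.part b := by
  constructor
  · intro h a b hab
    obtain ⟨c, hc, hPc⟩ := h (P.part_mem.2 (mem_univ a))
    have hb : b ∈ P.part a := part_eq_part_iff_mem.1 hab
    rw [Q.part_eq_of_mem hc (hPc (P.mem_part (mem_univ a))), Q.part_eq_of_mem hc (hPc hb)]
  · intro h p hp
    obtain ⟨a, ha⟩ := P.nonempty_of_mem_parts hp
    refine ⟨Q.part a, Q.part_mem.2 (mem_univ a), fun b hb => part_eq_part_iff_mem.1 (h a b ?_)⟩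
    rw [P.part_eq_of_mem hp ha, P.part_eq_of_mem hp hb]

noncomputable def ker (g : α → ι) : Finpartition (univ : Finset α) := ofSetoid (Setoid.ker g)

lemma part_ker_eq_part_iff {g : α → ι} {a b : α} :
    (ker g).part a = (ker g).part b ↔ g a = g b :=
  part_eq_part_iff_mem.trans mem_part_ofSetoid_iff_rel

lemma le_ker_iff {P : Finpartition (univ : Finset α)} {g : α → ι} :
    P ≤ ker g ↔ ∀ a b, P.part a = P.part b → g a = g b := by
  simp only [le_iff_part_eq_part_imp, part_ker_eq_part_iff]

lemma parts_ker [Fintype ι] (g : α → ι) :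
    (ker g).parts = (univ.image g).image fun i => univ.filter (g · = i) := by
  rw [ker, ofSetoid, ofSetSetoid_parts, image_image]
  exact image_congr fun a _ => filter_congr fun b _ => Setoid.ker_def.trans eq_comm

lemma prod_parts_ker [Fintype ι] {M : Type*} [CommMonoid M] (g : α → ι) {F : Finset α → M}
    (hF : F ∅ = 1) : ∏ q ∈ (ker g).parts, F q = ∏ i, F (univ.filter (g · = i)) := by
  rw [parts_ker, prod_image]
  · refine prod_subset (subset_univ _) fun i _ hi => ?_
    rw [filter_eq_empty_iff.2 fun a _ hai => hi (mem_image.2 ⟨a, mem_univ a, hai⟩), hF]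
  · intro i hi i' _ hii'
    obtain ⟨a, -, rfl⟩ := mem_image.1 hi
    have ha : a ∈ univ.filter (g · = i') := by
      dsimp only at hii'
      simp [← hii']
    exact (mem_filter.1 ha).2

noncomputable def partOf (P : Finpartition (univ : Finset α)) (a : α) : P.parts :=
  ⟨P.part a, P.part_mem.2 (mem_univ a)⟩

variable (P : Finpartition (univ : Finset α))

lemma partOf_eq_iff {a : α} {q : P.parts} : P.partOf a = q ↔ a ∈ (q : Finset α) :=
  Subtype.ext_iff.trans (P.part_eq_iff_mem q.2)

lemma partOf_surjective : Function.Surjective P.partOf := fun q =>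
  (P.nonempty_of_mem_parts q.2).imp fun _ ha => (P.partOf_eq_iff).2 ha

lemma filter_partOf_eq (q : P.parts) : univ.filter (P.partOf · = q) = q := by
  ext a
  simp [partOf_eq_iff]

lemma prod_parts_sum_prod {R : Type*} [CommSemiring R] [Fintype ι] (Y : ι → α → R) :
    ∏ p ∈ P.parts, ∑ i, ∏ a ∈ p, Y i a = ∑ f : P.parts → ι, ∏ a, Y (f (P.partOf a)) a := by
  rw [← prod_coe_sort, Fintype.prod_sum]
  refine sum_congr rfl fun f _ => ?_
  rw [← prod_fiberwise_eq_prod_apply univ P.partOf fun q a => Y (f q) a]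
  simp only [filter_partOf_eq]

lemma le_ker_comp_partOf (f : P.parts → ι) : P ≤ ker (f ∘ P.partOf) :=
  le_ker_iff.2 fun _ _ h => congrArg f (Subtype.ext h)

lemma ker_comp_partOf_eq_iff {e : P.parts → ι} :
    ker (e ∘ P.partOf) = P ↔ Function.Injective e := by
  rw [← (P.le_ker_comp_partOf e).ge_iff_eq', le_iff_part_eq_part_imp]
  simp only [part_ker_eq_part_iff, Function.comp_apply]
  exact (forall₂_congr fun a b => imp_congr_right fun _ => Subtype.ext_iff.symm).trans
    (P.partOf_surjective.forall₂ (p := fun q q' => e q = e q' → q = q')).symm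

section
variable [Fintype ι]

lemma image_comp_partOf :
    univ.image (fun f : P.parts → ι => f ∘ P.partOf) = univ.filter fun g : α → ι => P ≤ ker g := by
  ext g
  simp only [mem_image, mem_univ, true_and, mem_filter]
  refine ⟨fun ⟨f, hf⟩ => hf ▸ P.le_ker_comp_partOf f,
    fun h => ⟨g ∘ Function.surjInv P.partOf_surjective, funext fun a => ?_⟩⟩
  exact le_ker_iff.1 h _ _ (congrArg Subtype.val (Function.surjInv_eq P.partOf_surjective _))

lemma card_filter_ker_eq :
    #(univ.filter fun g : α → ι => ker g = P) = (Fintype.card ι).descFactorial #P.parts := by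
  have hfilter : univ.filter (fun g : α → ι => ker g = P) =
      (univ.filter fun e : P.parts → ι => Function.Injective e).image (· ∘ P.partOf) := by
    calc univ.filter (fun g : α → ι => ker g = P)
        = (univ.filter fun g : α → ι => P ≤ ker g).filter (ker · = P) := by
          rw [filter_filter]
          exact filter_congr fun g _ => ⟨fun h => ⟨h.ge, h⟩, And.right⟩
      _ = _ := by
          rw [← image_comp_partOf, filter_image]
          simp only [ker_comp_partOf_eq_iff]
  rw [hfilter, card_image_of_injective _ P.partOf_surjective.injective_comp_right,
    ← Fintype.card_subtype, Fintype.card_congr (Equiv.subtypeInjectiveEquivEmbedding _ _),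
    Fintype.card_embedding_eq, Fintype.card_coe]

lemma sum_ker_comp_partOf {M : Type*} [AddCommMonoid M] (F : Finpartition (univ : Finset α) → M) :
    ∑ f : P.parts → ι, F (ker (f ∘ P.partOf)) =
      ∑ σ, if P ≤ σ then (Fintype.card ι).descFactorial #σ.parts • F σ else 0 := by
  calc ∑ f : P.parts → ι, F (ker (f ∘ P.partOf))
      = ∑ g ∈ univ.filter fun g : α → ι => P ≤ ker g, F (ker g) := by
        rw [← image_comp_partOf, sum_image P.partOf_surjective.injective_comp_right.injOn]
    _ = ∑ σ, ∑ g ∈ univ.filter fun g : α → ι => P ≤ ker g ∧ ker g = σ, F (ker g) := by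
        simp only [← filter_filter]
        exact (sum_fiberwise _ _ _).symm
    _ = _ := sum_congr rfl fun σ _ => by
        split_ifs with hPσ
        · rw [filter_congr fun g _ => and_iff_right_of_imp fun hg => hg ▸ hPσ,
            ← card_filter_ker_eq σ, ← sum_const]
          exact sum_congr rfl fun g hg => by rw [(mem_filter.1 hg).2]
        · rw [filter_false_of_mem fun g _ ⟨hg, hgσ⟩ => hPσ (hgσ ▸ hg), sum_empty]

end

end Finpartition

section Moments

variable {m : ℕ} {ι : Type*} [Fintype ι] (P : Measure (Fin m → ℝ))

lemma moment_empty [IsProbabilityMeasure P] : moment P ∅ = 1 := by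
  simp [moment]

lemma prod_apply_comp_eq_prod_fiberwise (g : Fin m → ι) :
    (fun Y : ι → Fin m → ℝ => ∏ j, Y (g j) j)
      = fun Y => ∏ i, ∏ j ∈ univ.filter (g · = i), Y i j :=
  funext fun Y => (prod_fiberwise_eq_prod_apply univ g Y).symm

lemma integrable_prod_apply_comp [SigmaFinite P]
    (hint : ∀ s : Finset (Fin m), Integrable (fun x => ∏ j ∈ s, x j) P) (g : Fin m → ι) :
    Integrable (fun Y : ι → Fin m → ℝ => ∏ j, Y (g j) j) (Measure.pi fun _ => P) := by
  rw [prod_apply_comp_eq_prod_fiberwise]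
  exact Integrable.fintype_prod fun i => hint _

lemma integral_prod_apply_comp [IsProbabilityMeasure P] (g : Fin m → ι) :
    ∫ Y : ι → Fin m → ℝ, ∏ j, Y (g j) j ∂(Measure.pi fun _ => P)
      = momentProd P (Finpartition.ker g) := by
  rw [prod_apply_comp_eq_prod_fiberwise, integral_fintype_prod_eq_prod
    fun i (x : Fin m → ℝ) => ∏ j ∈ univ.filter (g · = i), x j]
  exact (Finpartition.prod_parts_ker g (moment_empty P)).symm

end Moments

theorem integral_empirical_momentProd_general (N m : ℕ)
    (P : Measure (Fin m → ℝ)) [IsProbabilityMeasure P]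
    (hint : ∀ s : Finset (Fin m), Integrable (fun x => ∏ j ∈ s, x j) P)
    (π : Finpartition (Finset.univ : Finset (Fin m))) :
    ∫ Y : Fin N → (Fin m → ℝ),
        ∏ p ∈ π.parts, ((N : ℝ)⁻¹ * ∑ i : Fin N, ∏ j ∈ p, Y i j)
        ∂(Measure.pi fun _ : Fin N => P)
      = ∑ σ : Finpartition (Finset.univ : Finset (Fin m)),
          (if π ≤ σ then
            ((N.descFactorial σ.parts.card : ℝ) / (N : ℝ) ^ π.parts.card) * momentProd P σ
          else 0) := by
  have hexpand (Y : Fin N → Fin m → ℝ) :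
      ∏ p ∈ π.parts, ((N : ℝ)⁻¹ * ∑ i : Fin N, ∏ j ∈ p, Y i j)
        = (N : ℝ)⁻¹ ^ #π.parts * ∑ f : π.parts → Fin N, ∏ j, Y ((f ∘ π.partOf) j) j := by
    rw [prod_mul_distrib, prod_const, π.prod_parts_sum_prod]
    rfl
  rw [funext hexpand, integral_const_mul,
    integral_finsetSum _ fun f _ => integrable_prod_apply_comp P hint _,
    sum_congr rfl fun f _ => integral_prod_apply_comp P (f ∘ π.partOf),
    π.sum_ker_comp_partOf (momentProd P), Fintype.card_fin, mul_sum]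
  refine sum_congr rfl fun σ _ => ?_
  split_ifs
  · rw [nsmul_eq_mul, div_eq_mul_inv, inv_pow]
    ring
  · rw [mul_zero]

/-- The expectation under `N` i.i.d. samples of the moment product `μ_π` of the empirical
distribution equals `Σ_{σ ≥ π} (N^{(#σ)} / N^{#π}) · μ_σ(P)`. -/
theorem integral_empirical_momentProd (N m : ℕ) (hN : 1 ≤ N) (hm : 1 ≤ m)
    (P : Measure (Fin m → ℝ)) [IsProbabilityMeasure P]
    (hint : ∀ s : Finset (Fin m), Integrable (fun x => ∏ j ∈ s, x j) P)
    (π : Finpartition (Finset.univ : Finset (Fin m))) :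
    ∫ Y : Fin N → (Fin m → ℝ),
        ∏ p ∈ π.parts, ((N : ℝ)⁻¹ * ∑ i : Fin N, ∏ j ∈ p, Y i j)
        ∂(Measure.pi fun _ : Fin N => P)
      = ∑ σ : Finpartition (Finset.univ : Finset (Fin m)),
          (if π ≤ σ then
            ((N.descFactorial σ.parts.card : ℝ) / (N : ℝ) ^ π.parts.card) * momentProd P σ
          else 0) :=
  integral_empirical_momentProd_general N m P hint π
end

section
/- Let N, m ≥ 1 and let P be a probability measure on Fin m → ℝ such that for every s ⊆ {1,…,m} the function x ↦ ∏_{j∈s} x_j is P-integrable. Then for every π ∈ Π(m) with #π ≤ N: ( N^{(#π)} )⁻¹ · ∫ Σ_{i respects π} ∏_{j=1}^m Y_{i(j), j} dP^{⊗N}(Y) = μ_π(P), where the inner sum ranges over all multi-indices i : Fin m → Fin N respecting π and N^{(k)} = N(N−1)⋯(N−k+1). In other words, the symmetric statistic associated with π is an unbiased estimator of the moment product μ_π(P). -/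
open Finset MeasureTheory
open scoped Classical

/-- Decidability of the kernel relation of a multi-index. -/
instance kerDec {m N : ℕ} (i : Fin m → Fin N) : DecidableRel (Setoid.ker i).r :=
  fun a b => decEq (i a) (i b)

/-- The kernel partition `ker i` of a multi-index `i : Fin m → Fin N`:
the partition of `Fin m` into the fibers of `i`. -/
def kerPart {m N : ℕ} (i : Fin m → Fin N) :
    Finpartition (Finset.univ : Finset (Fin m)) :=
  Finpartition.ofSetoid (Setoid.ker i)

/-!
By linearity, the expectation of the statistic is a sum over the multi-indices `i` with
`ker i = π`. For each such `i` the product `∏_j Y_{i(j),j}` splits along the fibres of `i` into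
factors depending on distinct, independent rows, so its expectation is `∏_{p ∈ π} μ_p = μ_π`
(empty fibres contribute `μ_∅ = 1`).
These `i` are exactly the maps `e ∘ (j ↦ part of j)` with `e` an injection of the `#π` parts into
`Fin N`, and there are `N^{(#π)}` of them.
-/

lemma Finpartition.parts_eq_image_part {α : Type*} [DecidableEq α] {s : Finset α}
    (P : Finpartition s) : P.parts = s.image P.part := by
  ext p
  rw [mem_image]
  refine ⟨fun hp => P.part_surjOn hp, ?_⟩
  rintro ⟨a, ha, rfl⟩
  exact P.part_mem.2 ha

lemma Finpartition.eq_of_part_eq {α : Type*} [DecidableEq α] {s : Finset α}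
    {P Q : Finpartition s} (h : ∀ a ∈ s, P.part a = Q.part a) : P = Q := by
  ext1
  rw [P.parts_eq_image_part, Q.parts_eq_image_part]
  exact image_congr h

/-- Among maps `i : α → γ`, those with the same kernel as a surjection `q : α → β` are exactly
the `e ∘ q` with `e : β ↪ γ`. -/
lemma card_filter_ker_eq_card_embedding {α β γ : Type*} [Fintype α] [Fintype β] [Fintype γ]
    {q : α → β} (hq : Function.Surjective q) :
    #{i : α → γ | ∀ a b, i a = i b ↔ q a = q b} = Fintype.card (β ↪ γ) := by
  have himage : ({i : α → γ | ∀ a b, i a = i b ↔ q a = q b} : Finset _) =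
      univ.image fun e : β ↪ γ => e ∘ q := by
    ext i
    simp only [mem_filter, mem_univ, true_and, mem_image]
    constructor
    · intro hi
      set r := Function.surjInv hq
      refine ⟨⟨i ∘ r, fun b b' hbb' => ?_⟩, funext fun a => ?_⟩
      · simpa only [r, Function.surjInv_eq hq] using (hi (r b) (r b')).1 hbb'
      · exact (hi (r (q a)) a).2 (Function.surjInv_eq hq _)
    · rintro ⟨e, rfl⟩ a b
      exact e.injective.eq_iff
  rw [himage, card_image_of_injective _ fun e e' h =>
    DFunLike.coe_injective (hq.injective_comp_right h), card_univ]

section KernelPartition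

variable {m N : ℕ}

lemma kerPart_eq_iff (i : Fin m → Fin N) (π : Finpartition (univ : Finset (Fin m))) :
    kerPart i = π ↔ ∀ a b, i a = i b ↔ π.part a = π.part b := by
  have hker : ∀ a b, b ∈ (kerPart i).part a ↔ i a = i b := fun _ _ =>
    Finpartition.mem_part_ofSetoid_iff_rel
  constructor
  · rintro rfl a b
    rw [← hker, (kerPart i).mem_part_iff_part_eq_part (mem_univ b) (mem_univ a), eq_comm]
  · refine fun h => Finpartition.eq_of_part_eq fun a _ => ?_
    ext b
    rw [hker, h, π.mem_part_iff_part_eq_part (mem_univ b) (mem_univ a), eq_comm]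

lemma card_filter_kerPart_eq (π : Finpartition (univ : Finset (Fin m))) :
    #{i : Fin m → Fin N | kerPart i = π} = N.descFactorial #π.parts := by
  let q : Fin m → π.parts := fun j => ⟨π.part j, π.part_mem.2 (mem_univ j)⟩
  have hq : Function.Surjective q := fun ⟨p, hp⟩ => by
    obtain ⟨a, -, rfl⟩ := π.part_surjOn hp
    exact ⟨a, rfl⟩
  calc #{i : Fin m → Fin N | kerPart i = π}
      = #{i : Fin m → Fin N | ∀ a b, i a = i b ↔ q a = q b} := by
        simp only [kerPart_eq_iff, q, Subtype.mk.injEq]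
    _ = Fintype.card (π.parts ↪ Fin N) := by convert card_filter_ker_eq_card_embedding hq
    _ = N.descFactorial #π.parts := by
        rw [Fintype.card_embedding_eq, Fintype.card_fin, Fintype.card_coe]

lemma prod_fiber_eq_prod_parts_kerPart {M : Type*} [CommMonoid M] {f : Finset (Fin m) → M}
    (hf : f ∅ = 1) (i : Fin m → Fin N) :
    ∏ k, f {j | i j = k} = ∏ p ∈ (kerPart i).parts, f p := by
  have hparts :
      (kerPart i).parts = (univ.image i).image fun k => ({j | i j = k} : Finset (Fin m)) := by
    simp only [kerPart, Finpartition.ofSetoid, Finpartition.ofSetSetoid_parts, image_image,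
      Function.comp_def]
    refine image_congr fun a _ => filter_congr fun b _ => ?_
    exact eq_comm
  have hinj : Set.InjOn (fun k => ({j | i j = k} : Finset (Fin m))) (univ.image i) := by
    intro k' hk' k _ hfib
    obtain ⟨a, -, rfl⟩ := mem_image.1 hk'
    have ha : a ∈ ({j | i j = i a} : Finset (Fin m)) := by simp
    simpa [hfib] using ha
  rw [hparts, prod_image hinj]
  refine (prod_subset (subset_univ _) fun k _ hk => ?_).symm
  have hempty : ({j | i j = k} : Finset (Fin m)) = ∅ :=
    filter_eq_empty_iff.2 fun j _ hj => hk (hj ▸ mem_image_of_mem i (mem_univ j))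
  rw [hempty, hf]

end KernelPartition

section Moments

variable {m N : ℕ} (P : Measure (Fin m → ℝ))

lemma prod_coord_eq_prod_fiber (i : Fin m → Fin N) (Y : Fin N → Fin m → ℝ) :
    ∏ j, Y (i j) j = ∏ k, ∏ j ∈ {j | i j = k}, Y k j := by
  rw [← prod_fiberwise univ i]
  refine prod_congr rfl fun k _ => prod_congr rfl fun j hj => ?_
  rw [(mem_filter.1 hj).2]

lemma integrable_prod_coord [SigmaFinite P]
    (hint : ∀ s : Finset (Fin m), Integrable (fun x => ∏ j ∈ s, x j) P) (i : Fin m → Fin N) :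
    Integrable (fun Y : Fin N → Fin m → ℝ => ∏ j, Y (i j) j) (Measure.pi fun _ => P) := by
  simp_rw [prod_coord_eq_prod_fiber i]
  exact Integrable.fintype_prod fun k => hint _

lemma integral_prod_coord [IsProbabilityMeasure P] (i : Fin m → Fin N) :
    ∫ Y : Fin N → Fin m → ℝ, ∏ j, Y (i j) j ∂(Measure.pi fun _ => P)
      = momentProd P (kerPart i) := by
  simp_rw [prod_coord_eq_prod_fiber i]
  rw [integral_fintype_prod_eq_prod]
  exact prod_fiber_eq_prod_parts_kerPart (f := moment P) (by simp [moment]) i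

end Moments

theorem symmetric_statistic_unbiased_general (N m : ℕ)
    (P : Measure (Fin m → ℝ)) [IsProbabilityMeasure P]
    (hint : ∀ s : Finset (Fin m), Integrable (fun x => ∏ j ∈ s, x j) P)
    (π : Finpartition (Finset.univ : Finset (Fin m))) (hπ : π.parts.card ≤ N) :
    ((N.descFactorial π.parts.card : ℝ))⁻¹ *
      ∫ Y : Fin N → (Fin m → ℝ),
        ∑ i ∈ Finset.univ.filter (fun i : Fin m → Fin N => kerPart i = π),
          ∏ j : Fin m, Y (i j) j
        ∂(Measure.pi fun _ : Fin N => P)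
      = momentProd P π := by
  have hcard : (N.descFactorial #π.parts : ℝ) ≠ 0 :=
    mod_cast (Nat.descFactorial_pos.2 hπ).ne'
  rw [integral_finsetSum _ fun i _ => integrable_prod_coord P hint i,
    sum_congr rfl fun i hi => (integral_prod_coord P i).trans
      (congrArg (momentProd P) (mem_filter.1 hi).2),
    sum_const, card_filter_kerPart_eq, nsmul_eq_mul, inv_mul_cancel_left₀ hcard]

/-- The symmetric statistic associated with `π` is an unbiased estimator of the moment
product `μ_π(P)`:  `(N^{(#π)})⁻¹ ∫ Σ_{ker i = π} ∏_j Y_{i(j),j} dP^{⊗N}(Y) = μ_π(P)`. -/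
theorem symmetric_statistic_unbiased (N m : ℕ) (hN : 1 ≤ N) (hm : 1 ≤ m)
    (P : Measure (Fin m → ℝ)) [IsProbabilityMeasure P]
    (hint : ∀ s : Finset (Fin m), Integrable (fun x => ∏ j ∈ s, x j) P)
    (π : Finpartition (Finset.univ : Finset (Fin m))) (hπ : π.parts.card ≤ N) :
    ((N.descFactorial π.parts.card : ℝ))⁻¹ *
      ∫ Y : Fin N → (Fin m → ℝ),
        ∑ i ∈ Finset.univ.filter (fun i : Fin m → Fin N => kerPart i = π),
          ∏ j : Fin m, Y (i j) j
        ∂(Measure.pi fun _ : Fin N => P)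
      = momentProd P π :=
  symmetric_statistic_unbiased_general N m P hint π hπ
end

section
/- Let m ≥ 1, N be integers with N ≥ 8·m² and N ≥ m + 1. Then N^{(m)}/N^m ≥ 3/4, and consequently the resampling matrix S on ℝ^{Π(m)} satisfies ‖Id − S‖₁ ≤ 1/2, where ‖·‖₁ is the operator norm induced by the ℓ¹ norm on ℝ^{Π(m)}. -/
/-!
Bernoulli's inequality gives `N^{(k)} / N^k ≥ (1 - k/N)^k ≥ 1 - k²/N`, which is at least `3/4`
once `4k² ≤ N`.

The column `σ` of `S` is nonnegative and sums to at most `1`: a coarsening `π ≥ σ` together with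
an injective colouring of its parts by `N` colours is recovered from the colouring it induces on
the parts of `σ`, so `∑_{π ≥ σ} N^{(#π)} ≤ N^{#σ}`. Hence column `σ` of `Id - S` has `ℓ¹` norm at
most `2 (1 - S_{σσ}) ≤ 1/2`, and the `ℓ¹` operator norm is bounded by the largest column norm.
-/

open Finset
open scoped Classical

/-- The resampling matrix `S ∈ ℝ^{Π(m)×Π(m)}`:
`S_{π,σ} = N^{(#π)} / N^{#σ}` if `σ ≤ π`, and `0` otherwise. -/
noncomputable def resampS (N m : ℕ) :
    Matrix (Finpartition (Finset.univ : Finset (Fin m)))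
      (Finpartition (Finset.univ : Finset (Fin m))) ℝ :=
  fun π σ =>
    if σ ≤ π then (N.descFactorial π.parts.card : ℝ) / (N : ℝ) ^ σ.parts.card else 0

/-- The operator norm induced by the `ℓ¹` norm: `‖A‖₁ = sup_{f ≠ 0} ‖Af‖₁ / ‖f‖₁`. -/
noncomputable def opNormL1 {ι : Type*} [Fintype ι] (A : Matrix ι ι ℝ) : ℝ :=
  ⨆ f : {f : ι → ℝ // f ≠ 0},
    (∑ π, |A.mulVec (f : ι → ℝ) π|) / (∑ π, |(f : ι → ℝ) π|)
namespace Finpartition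

variable {α : Type*} [DecidableEq α] {s : Finset α}

theorem part_injective : Function.Injective (part : Finpartition s → α → Finset α) := by
  have parts_subset : ∀ P Q : Finpartition s, P.part = Q.part → P.parts ⊆ Q.parts := by
    intro P Q hPQ t ht
    obtain ⟨a, ha⟩ := P.nonempty_of_mem_parts ht
    rw [← P.part_eq_of_mem ht ha, hPQ]
    exact Q.part_mem.2 (P.le ht ha)
  exact fun P Q hPQ ↦
    Finpartition.ext ((parts_subset P Q hPQ).antisymm (parts_subset Q P hPQ.symm))

variable (σ : Finpartition s) (N : ℕ)

/-- Each part of `σ` gets the colour of the part of `π` containing it. -/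
noncomputable def coloringOfCoarsening
    (t : Σ π : {π : Finpartition s // σ ≤ π}, π.1.parts ↪ Fin N) : σ.parts → Fin N :=
  fun b ↦ t.2 ⟨(t.1.2 b.2).choose, (t.1.2 b.2).choose_spec.1⟩

variable {σ N}

theorem coloringOfCoarsening_part (t : Σ π : {π : Finpartition s // σ ≤ π}, π.1.parts ↪ Fin N)
    {a : α} (ha : a ∈ s) :
    coloringOfCoarsening σ N t ⟨σ.part a, σ.part_mem.2 ha⟩ =
      t.2 ⟨t.1.1.part a, t.1.1.part_mem.2 ha⟩ := by
  obtain ⟨hc, hσc⟩ := (t.1.2 (σ.part_mem.2 ha)).choose_spec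
  exact congrArg t.2 (Subtype.ext (t.1.1.part_eq_of_mem hc (hσc (σ.mem_part ha))).symm)

theorem coloringOfCoarsening_injective : Function.Injective (coloringOfCoarsening σ N) := by
  rintro ⟨⟨π₁, h₁⟩, g₁⟩ ⟨⟨π₂, h₂⟩, g₂⟩ heq
  have mem_part_iff : ∀ (π : Finpartition s) (h : σ ≤ π) (g : π.parts ↪ Fin N) {a b : α}
      (ha : a ∈ s) (hb : b ∈ s), b ∈ π.part a ↔
        coloringOfCoarsening σ N ⟨⟨π, h⟩, g⟩ ⟨σ.part b, σ.part_mem.2 hb⟩ =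
          coloringOfCoarsening σ N ⟨⟨π, h⟩, g⟩ ⟨σ.part a, σ.part_mem.2 ha⟩ := by
    intro π h g a b ha hb
    rw [coloringOfCoarsening_part _ ha, coloringOfCoarsening_part _ hb, g.apply_eq_iff_eq,
      Subtype.mk.injEq, π.mem_part_iff_part_eq_part hb ha]
  obtain rfl : π₁ = π₂ := by
    refine part_injective (funext fun a ↦ ?_)
    by_cases ha : a ∈ s
    · ext b
      by_cases hb : b ∈ s
      · rw [mem_part_iff π₁ h₁ g₁ ha hb, mem_part_iff π₂ h₂ g₂ ha hb, heq]
      · exact iff_of_false (fun h ↦ hb (π₁.part_subset a h)) (fun h ↦ hb (π₂.part_subset a h))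
    · rw [π₁.part_eq_empty.2 ha, π₂.part_eq_empty.2 ha]
  obtain rfl : g₁ = g₂ := by
    ext ⟨t, ht⟩
    obtain ⟨a, ha, rfl⟩ := π₁.part_surjOn ht
    rw [← coloringOfCoarsening_part ⟨⟨π₁, h₁⟩, g₁⟩ ha,
      ← coloringOfCoarsening_part ⟨⟨π₁, h₂⟩, g₂⟩ ha, heq]
  rfl

theorem sum_descFactorial_card_parts_le :
    ∑ π ∈ univ.filter (σ ≤ ·), N.descFactorial #π.parts ≤ N ^ #σ.parts := by
  calc ∑ π ∈ univ.filter (σ ≤ ·), N.descFactorial #π.parts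
      = ∑ π : {π : Finpartition s // σ ≤ π}, Fintype.card (π.1.parts ↪ Fin N) := by
        rw [Finset.sum_subtype (p := (σ ≤ ·)) (F := inferInstance) _ (by simp)]
        simp [Fintype.card_embedding_eq]
    _ = Fintype.card (Σ π : {π : Finpartition s // σ ≤ π}, π.1.parts ↪ Fin N) :=
        Fintype.card_sigma.symm
    _ ≤ Fintype.card (σ.parts → Fin N) :=
        Fintype.card_le_of_injective _ coloringOfCoarsening_injective
    _ = N ^ #σ.parts := by simp

end Finpartition

theorem one_sub_sq_div_le_descFactorial_div_pow {N k : ℕ} (hk : k ≤ N) :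
    1 - (k : ℝ) ^ 2 / N ≤ N.descFactorial k / (N : ℝ) ^ k := by
  rcases N.eq_zero_or_pos with rfl | hN
  · obtain rfl : k = 0 := Nat.le_zero.1 hk
    simp
  have hN' : (0 : ℝ) < N := by exact_mod_cast hN
  have hkN : (k : ℝ) / N ≤ 1 := div_le_one_of_le₀ (by exact_mod_cast hk) hN'.le
  have sub_pow_le : ((N - k : ℕ) : ℝ) ^ k ≤ N.descFactorial k := by
    exact_mod_cast (Nat.pow_le_pow_left (by omega) k).trans (N.pow_sub_le_descFactorial k)
  calc 1 - (k : ℝ) ^ 2 / N = 1 + k * -(k / N) := by ring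
    _ ≤ (1 + -(k / N)) ^ k := one_add_mul_le_pow (by linarith) k
    _ = ((N - k : ℕ) : ℝ) ^ k / (N : ℝ) ^ k := by
        rw [Nat.cast_sub hk, ← div_pow]
        congr 1
        field_simp
        ring
    _ ≤ N.descFactorial k / (N : ℝ) ^ k := by gcongr

theorem three_quarters_le_descFactorial_div_pow {N k : ℕ} (h : 4 * k ^ 2 ≤ N) :
    (3 / 4 : ℝ) ≤ N.descFactorial k / (N : ℝ) ^ k := by
  have hkN : k ≤ N := by nlinarith
  have h' : 4 * (k : ℝ) ^ 2 ≤ N := by exact_mod_cast h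
  have hsq : (k : ℝ) ^ 2 / N ≤ 1 / 4 :=
    div_le_of_le_mul₀ (Nat.cast_nonneg N) (by norm_num) (by linarith)
  linarith [one_sub_sq_div_le_descFactorial_div_pow hkN]

theorem Matrix.sum_abs_one_sub_apply_le {ι : Type*} [Fintype ι] [DecidableEq ι]
    (S : Matrix ι ι ℝ) (hS : ∀ i j, 0 ≤ S i j) (j : ι) (hcol : ∑ i, S i j ≤ 1) :
    ∑ i, |(1 - S) i j| ≤ 2 * (1 - S j j) := by
  have hoff : ∑ i ∈ univ.erase j, |(1 - S) i j| = ∑ i ∈ univ.erase j, S i j :=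
    sum_congr rfl fun i hi ↦ by
      rw [sub_apply, one_apply_ne (ne_of_mem_erase hi), zero_sub, abs_neg, abs_of_nonneg (hS i j)]
  have hsplit := add_sum_erase univ (S · j) (mem_univ j)
  have hjj : S j j ≤ 1 :=
    (single_le_sum (fun i _ ↦ hS i j) (mem_univ j)).trans hcol
  rw [← add_sum_erase _ _ (mem_univ j), hoff, sub_apply, one_apply_eq, abs_of_nonneg (by linarith)]
  linarith

theorem opNormL1_le_of_sum_abs_le {ι : Type*} [Fintype ι] (A : Matrix ι ι ℝ) {c : ℝ}
    (hc : 0 ≤ c) (hA : ∀ j, ∑ i, |A i j| ≤ c) : opNormL1 A ≤ c := by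
  refine Real.iSup_le (fun ⟨f, hf⟩ ↦ ?_) hc
  obtain ⟨j₀, hj₀⟩ := Function.ne_iff.1 hf
  have hf_pos : 0 < ∑ j, |f j| :=
    (abs_pos.2 hj₀).trans_le (single_le_sum (fun j _ ↦ abs_nonneg (f j)) (mem_univ j₀))
  rw [div_le_iff₀ hf_pos, mul_sum]
  calc ∑ i, |A.mulVec f i| ≤ ∑ i, ∑ j, |A i j| * |f j| :=
        sum_le_sum fun i _ ↦ (abs_sum_le_sum_abs _ _).trans_eq (by simp only [abs_mul])
    _ = ∑ j, (∑ i, |A i j|) * |f j| := by rw [sum_comm]; simp only [sum_mul]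
    _ ≤ ∑ j, c * |f j| := sum_le_sum fun j _ ↦ by gcongr; exact hA j

theorem resampS_nonneg (N m : ℕ) (π σ : Finpartition (univ : Finset (Fin m))) :
    0 ≤ resampS N m π σ := by
  unfold resampS
  split_ifs <;> positivity

theorem resampS_self (N m : ℕ) (σ : Finpartition (univ : Finset (Fin m))) :
    resampS N m σ σ = N.descFactorial #σ.parts / (N : ℝ) ^ #σ.parts := by
  simp [resampS]

theorem sum_resampS_le_one (N m : ℕ) (σ : Finpartition (univ : Finset (Fin m))) :
    ∑ π, resampS N m π σ ≤ 1 := by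
  unfold resampS
  rw [← sum_filter, ← sum_div]
  refine div_le_one_of_le₀ ?_ (by positivity)
  exact_mod_cast σ.sum_descFactorial_card_parts_le

theorem linear_convergence_regime_general (m N : ℕ)
    (hN₁ : 8 * m ^ 2 ≤ N) :
    (3 / 4 : ℝ) ≤ (N.descFactorial m : ℝ) / (N : ℝ) ^ m ∧
    opNormL1 (1 - resampS N m) ≤ 1 / 2 := by
  have hN : ∀ k ≤ m, 4 * k ^ 2 ≤ N := fun k hk ↦ by nlinarith
  refine ⟨three_quarters_le_descFactorial_div_pow (hN m le_rfl),
    opNormL1_le_of_sum_abs_le _ (by norm_num) fun σ ↦ ?_⟩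
  have hσ : #σ.parts ≤ m := σ.card_parts_le_card.trans_eq (card_fin m)
  calc ∑ π, |(1 - resampS N m) π σ| ≤ 2 * (1 - resampS N m σ σ) :=
        (resampS N m).sum_abs_one_sub_apply_le (resampS_nonneg N m) σ (sum_resampS_le_one N m σ)
    _ ≤ 1 / 2 := by
        linarith [resampS_self N m σ ▸ three_quarters_le_descFactorial_div_pow (hN _ hσ)]

/-- For `N ≥ 8·m²` and `N ≥ m + 1` we have `N^{(m)}/N^m ≥ 3/4`, and consequently
`‖Id − S‖₁ ≤ 1/2`. -/
theorem linear_convergence_regime (m N : ℕ) (hm : 1 ≤ m)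
    (hN₁ : 8 * m ^ 2 ≤ N) (hN₂ : m + 1 ≤ N) :
    (3 / 4 : ℝ) ≤ (N.descFactorial m : ℝ) / (N : ℝ) ^ m ∧
    opNormL1 (1 - resampS N m) ≤ 1 / 2 :=
  linear_convergence_regime_general m N hN₁
end

section
/- Let N ≥ m ≥ 1 be integers and let S be the resampling matrix on ℝ^{Π(m)}. Then the matrix powers (Id − S)^k converge to the zero matrix as k → ∞ (entrywise). Consequently the iterated bootstrap converges to an unbiased estimator for moment polynomials of order m whenever N ≥ m. -/
/-!
Order partitions by their number of parts. If `S_{π,σ} ≠ 0` then `σ ≤ π`, so `#σ ≥ #π`,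
with equality only for `σ = π`; hence `Id − S` is triangular for this grading. Its diagonal
entries `1 − N^{(k)}/N^k` lie in `[0, 1)` because `k ≤ m ≤ N`. Conjugating a graded-triangular
matrix by `diag(ε^{#π})` multiplies every off-diagonal entry by a positive power of `ε` and
leaves the diagonal alone, so for small `ε` the conjugate has `ℓ^∞` operator norm `< 1`, and
its powers tend to `0`.
-/

open Finset Filter
open scoped Classical Topology

theorem Finpartition.eq_of_le_of_card_parts_le {α : Type*} [DecidableEq α] {s : Finset α}
    {σ π : Finpartition s} (hle : σ ≤ π) (hcard : #σ.parts ≤ #π.parts) : σ = π := by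
  choose φ hφσ hφπ using fun b (hb : b ∈ π.parts) => exists_le_of_le hle hb
  have hφ_inj : ∀ b₁ b₂ hb₁ hb₂, φ b₁ hb₁ = φ b₂ hb₂ → b₁ = b₂ := by
    intro b₁ b₂ hb₁ hb₂ heq
    obtain ⟨x, hx⟩ := σ.nonempty_of_mem_parts (hφσ b₁ hb₁)
    exact π.eq_of_mem_parts hb₁ hb₂ (hφπ b₁ hb₁ hx) (hφπ b₂ hb₂ (heq ▸ hx))
  have hφ_surj := surj_on_of_inj_on_of_card_le φ hφσ hφ_inj hcard
  -- a point of `b` lies in some part `φ b'` of `σ`, and then `b' = b`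
  have hφ_eq : ∀ b hb, φ b hb = b := by
    refine fun b hb => (hφπ b hb).antisymm fun x hx => ?_
    obtain ⟨c, hc, hxc⟩ := σ.exists_mem (π.le hb hx)
    obtain ⟨b', hb', rfl⟩ := hφ_surj c hc
    obtain rfl := π.eq_of_mem_parts hb' hb (hφπ b' hb' hxc) hx
    exact hxc
  have hsub : π.parts ⊆ σ.parts := fun b hb => hφ_eq b hb ▸ hφσ b hb
  exact Finpartition.ext (eq_of_subset_of_card_le hsub hcard).symm

theorem Nat.descFactorial_div_pow_pos {N k : ℕ} (hk : k ≤ N) :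
    0 < (N.descFactorial k : ℝ) / (N : ℝ) ^ k := by
  have hpos : 0 < N.descFactorial k := Nat.descFactorial_pos.mpr hk
  have hpow : 0 < N ^ k := hpos.trans_le (Nat.descFactorial_le_pow N k)
  exact _root_.div_pos (mod_cast hpos) (mod_cast hpow)

theorem Nat.descFactorial_div_pow_le_one (N k : ℕ) :
    (N.descFactorial k : ℝ) / (N : ℝ) ^ k ≤ 1 :=
  div_le_one_of_le₀ (mod_cast Nat.descFactorial_le_pow N k) (by positivity)

namespace Matrix

variable {ι R 𝕜 : Type*} [Fintype ι] [DecidableEq ι]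

/-- For `A` triangular with respect to the grading `g`, this is `D⁻¹ * A * D` with
`D = diagonal (ε ^ g ·)`; the truncated exponent `g j - g i` only misbehaves where `A i j = 0`. -/
def gradedRescale [Semiring R] (g : ι → ℕ) (ε : R) (A : Matrix ι ι R) : Matrix ι ι R :=
  of fun i j => ε ^ (g j - g i) * A i j

theorem semiconjBy_diagonal_pow_gradedRescale [CommSemiring R] (g : ι → ℕ) {A : Matrix ι ι R}
    (hA : ∀ i j, i ≠ j → g j ≤ g i → A i j = 0) (ε : R) :
    SemiconjBy (diagonal fun i => ε ^ g i) (gradedRescale g ε A) A := by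
  ext i j
  simp only [gradedRescale, diagonal_mul, mul_diagonal, of_apply]
  by_cases hij : A i j = 0
  · simp [hij]
  have hg : g i ≤ g j := by
    by_contra! hlt
    exact hij (hA i j (by rintro rfl; exact lt_irrefl _ hlt) hlt.le)
  rw [← mul_assoc, ← pow_add, Nat.add_sub_cancel' hg, mul_comm]

variable [NontriviallyNormedField 𝕜]

section LinftyOpNorm

attribute [local instance] Matrix.linftyOpNormedRing

theorem exists_linfty_opNorm_gradedRescale_lt_one (g : ι → ℕ) {A : Matrix ι ι 𝕜}
    (hA : ∀ i j, i ≠ j → g j ≤ g i → A i j = 0) (hdiag : ∀ i, ‖A i i‖ < 1) :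
    ∃ ε : 𝕜, ε ≠ 0 ∧ ‖gradedRescale g ε A‖ < 1 := by
  have hB0 : gradedRescale g 0 A = diagonal fun i => A i i := by
    ext i j
    rcases eq_or_ne i j with rfl | hij
    · simp [gradedRescale]
    · rcases le_or_gt (g j) (g i) with hle | hlt
      · simp [gradedRescale, hA i j hij hle, hij]
      · simp [gradedRescale, hij, Nat.sub_ne_zero_of_lt hlt]
  have hcont : Continuous fun ε : 𝕜 => gradedRescale g ε A :=
    continuous_pi fun i => continuous_pi fun j => (continuous_pow (g j - g i)).mul continuous_const
  have hnorm : ‖gradedRescale g 0 A‖ < 1 := by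
    rw [hB0, linfty_opNorm_diagonal, pi_norm_lt_iff one_pos]
    exact hdiag
  have hev : ∀ᶠ ε in 𝓝[≠] (0 : 𝕜), ‖gradedRescale g ε A‖ < 1 :=
    nhdsWithin_le_nhds ((hcont.norm.tendsto 0).eventually (gt_mem_nhds hnorm))
  obtain ⟨ε, hε, hεne⟩ := (hev.and self_mem_nhdsWithin).exists
  exact ⟨ε, hεne, hε⟩

end LinftyOpNorm

theorem tendsto_pow_atTop_nhds_zero_of_triangular (g : ι → ℕ) {A : Matrix ι ι 𝕜}
    (hA : ∀ i j, i ≠ j → g j ≤ g i → A i j = 0) (hdiag : ∀ i, ‖A i i‖ < 1) :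
    Tendsto (fun k => A ^ k) atTop (𝓝 0) := by
  obtain ⟨ε, hε, hnorm⟩ := exists_linfty_opNorm_gradedRescale_lt_one g hA hdiag
  set D := diagonal fun i => ε ^ g i
  set D' := diagonal fun i => (ε ^ g i)⁻¹
  have hDD' : D * D' = 1 := by
    simp [D, D', diagonal_mul_diagonal, mul_inv_cancel₀ (pow_ne_zero _ hε)]
  have hconj : ∀ k, A ^ k = D * gradedRescale g ε A ^ k * D' := fun k => by
    rw [((semiconjBy_diagonal_pow_gradedRescale g hA ε).pow_right k).eq, mul_assoc, hDD', mul_one]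
  have hpow : Tendsto (fun k => gradedRescale g ε A ^ k) atTop (𝓝 0) := by
    let := Matrix.linftyOpNormedRing (n := ι) (α := 𝕜)
    exact tendsto_pow_atTop_nhds_zero_of_norm_lt_one hnorm
  simp only [hconj]
  simpa using (hpow.const_mul D).mul_const D'

end Matrix

theorem one_sub_resampS_apply_of_card_parts_le {N m : ℕ}
    {π σ : Finpartition (univ : Finset (Fin m))} (hne : π ≠ σ) (hcard : #σ.parts ≤ #π.parts) :
    (1 - resampS N m) π σ = 0 := by
  have hS : resampS N m π σ = 0 :=
    if_neg fun hle => hne (Finpartition.eq_of_le_of_card_parts_le hle hcard).symm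
  rw [Matrix.sub_apply, Matrix.one_apply_ne hne, hS, sub_zero]

theorem norm_one_sub_resampS_apply_self_lt_one {N m : ℕ} (hN : m ≤ N)
    (π : Finpartition (univ : Finset (Fin m))) : ‖(1 - resampS N m) π π‖ < 1 := by
  have hk : #π.parts ≤ N := π.card_parts_le_card.trans (by simpa using hN)
  have hS : resampS N m π π = (N.descFactorial #π.parts : ℝ) / (N : ℝ) ^ #π.parts :=
    if_pos le_rfl
  rw [Matrix.sub_apply, Matrix.one_apply_eq, hS, Real.norm_eq_abs, abs_sub_lt_iff]
  constructor <;>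
    linarith [Nat.descFactorial_div_pow_pos hk, Nat.descFactorial_div_pow_le_one N #π.parts]

theorem iterated_bootstrap_unbiased_limit_general (N m : ℕ) (hN : m ≤ N) :
    Tendsto (fun k : ℕ => (1 - resampS N m) ^ k) atTop
      (𝓝 (0 : Matrix (Finpartition (Finset.univ : Finset (Fin m)))
        (Finpartition (Finset.univ : Finset (Fin m))) ℝ)) :=
  Matrix.tendsto_pow_atTop_nhds_zero_of_triangular (fun π => #π.parts)
    (fun _ _ hne hcard => one_sub_resampS_apply_of_card_parts_le hne hcard)
    (norm_one_sub_resampS_apply_self_lt_one hN)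

/-- For `N ≥ m ≥ 1`, the powers `(Id − S)^k` converge (entrywise) to the zero matrix:
the iterated bootstrap converges to an unbiased estimator. -/
theorem iterated_bootstrap_unbiased_limit (N m : ℕ) (hm : 1 ≤ m) (hN : m ≤ N) :
    Tendsto (fun k : ℕ => (1 - resampS N m) ^ k) atTop
      (𝓝 (0 : Matrix (Finpartition (Finset.univ : Finset (Fin m)))
        (Finpartition (Finset.univ : Finset (Fin m))) ℝ)) :=
  iterated_bootstrap_unbiased_limit_general N m hN
end

section
/- Let N ≥ m ≥ 1 be integers, let S be the resampling matrix on ℝ^{Π(m)}, and for i = 1,…,m set η_i = ( N^{(i)}/N^i )⁻¹ = ( ∏_{j=N−i+1}^{N} j/N )⁻¹. Then for every f ∈ ℝ^{Π(m)}: ( ∏_{i=1}^m (Id − η_i S) ) (S f − f) = 0. In other words, the m-step nonstationary bootstrap with step sizes η_1,…,η_m yields an exactly unbiased estimator for every moment polynomial of order m. -/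
open Finset
open scoped Classical

/-- The step sizes `η_i = (N^{(i)}/N^i)⁻¹` of the nonstationary bootstrap. -/
noncomputable def eta (N i : ℕ) : ℝ := ((N.descFactorial i : ℝ) / (N : ℝ) ^ i)⁻¹

-- key partition lemma: le + card le ⇒ eq
lemma finpartition_eq_of_le_of_card_le {α : Type*} [DecidableEq α] {s : Finset α}
    {σ π : Finpartition s} (h : σ ≤ π) (hc : σ.parts.card ≤ π.parts.card) : σ = π := by
  have hc' : π.parts.card = σ.parts.card := le_antisymm (Finpartition.card_mono h) hc
  choose f hf hfsub using fun b (hb : b ∈ σ.parts) => h hb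
  set F : σ.parts → π.parts := fun b => ⟨f b.1 b.2, hf b.1 b.2⟩ with hF
  have hFsurj : Function.Surjective F := by
    rintro ⟨c, hcp⟩
    obtain ⟨b, hb, hbc⟩ := Finpartition.exists_le_of_le h hcp
    obtain ⟨x, hx⟩ := σ.nonempty_of_mem_parts hb
    exact ⟨⟨b, hb⟩, Subtype.ext (π.eq_of_mem_parts (hf b hb) hcp (hfsub b hb hx) (hbc hx))⟩
  have hFbij : Function.Bijective F :=
    (Fintype.bijective_iff_surjective_and_card F).2 ⟨hFsurj, by simp [hc']⟩
  have hsum1 : ∑ b : σ.parts, (f b.1 b.2).card = ∑ c : π.parts, (c : Finset α).card :=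
    Fintype.sum_bijective F hFbij _ _ (fun b => rfl)
  have hsum2 : ∑ b : σ.parts, (b : Finset α).card = ∑ b : σ.parts, (f b.1 b.2).card := by
    rw [hsum1, Finset.sum_coe_sort σ.parts (fun b => b.card),
      Finset.sum_coe_sort π.parts (fun b => b.card), σ.sum_card_parts, π.sum_card_parts]
  have hle : ∀ b : σ.parts, (b : Finset α).card ≤ (f b.1 b.2).card :=
    fun b => Finset.card_le_card (hfsub b.1 b.2)
  have hkey : ∀ b : σ.parts, (b : Finset α).card = (f b.1 b.2).card := by
    have := (Finset.sum_eq_sum_iff_of_le (s := Finset.univ)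
      (f := fun b : σ.parts => (b : Finset α).card)
      (g := fun b : σ.parts => (f b.1 b.2).card) (fun b _ => hle b)).1 hsum2
    exact fun b => this b (Finset.mem_univ b)
  have hsubset : σ.parts ⊆ π.parts := by
    intro b hb
    have : b = f b hb := Finset.eq_of_subset_of_card_le (hfsub b hb) (hkey ⟨b, hb⟩).ge
    rw [this]; exact hf b hb
  exact Finpartition.ext (Finset.eq_of_subset_of_card_le hsubset hc'.le)

-- step lemma
lemma resamp_step (N m k : ℕ) (hk1 : 1 ≤ k) (hkN : k ≤ N)
    (v : Finpartition (Finset.univ : Finset (Fin m)) → ℝ)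
    (hv : ∀ σ, k + 1 ≤ σ.parts.card → v σ = 0)
    (π : Finpartition (Finset.univ : Finset (Fin m))) (hπ : k ≤ π.parts.card) :
    ((1 - eta N k • resampS N m).mulVec v) π = 0 := by
  have hSv : (resampS N m).mulVec v π = resampS N m π π * v π := by
    rw [Matrix.mulVec, dotProduct]
    refine Finset.sum_eq_single π (fun σ _ hσ => ?_) (fun h => absurd (Finset.mem_univ π) h)
    by_cases hle : σ ≤ π
    · have hcard : π.parts.card < σ.parts.card := by
        rcases lt_or_eq_of_le (Finpartition.card_mono hle) with h | h
        · exact h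
        · exact absurd (finpartition_eq_of_le_of_card_le hle h.ge) hσ
      rw [hv σ (by omega), mul_zero]
    · simp [resampS, hle]
  have hmul : ((1 - eta N k • resampS N m).mulVec v) π
      = v π - eta N k * (resampS N m π π * v π) := by
    rw [Matrix.sub_mulVec, Matrix.smul_mulVec, Matrix.one_mulVec]
    simp [hSv]
  rw [hmul]
  rcases eq_or_lt_of_le hπ with h | h
  · have hdiag : resampS N m π π = (N.descFactorial k : ℝ) / (N : ℝ) ^ k := by
      simp [resampS, ← h]
    have hNd : (N.descFactorial k : ℝ) ≠ 0 := by
      exact_mod_cast fun h => absurd (Nat.descFactorial_eq_zero_iff_lt.1 (by exact_mod_cast h)) (not_lt.2 hkN)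
    have hNk : ((N : ℝ)) ^ k ≠ 0 := by
      have : 0 < N := lt_of_lt_of_le hk1 hkN
      positivity
    rw [hdiag, eta, inv_mul_cancel_left₀ (div_ne_zero hNd hNk)]
    ring
  · rw [hv π (by omega)]
    ring

lemma resamp_main (N m : ℕ) (hm : 1 ≤ m) (hN : m ≤ N) :
    ∀ n, n ≤ m → ∀ (v : Finpartition (Finset.univ : Finset (Fin m)) → ℝ)
      (π : Finpartition (Finset.univ : Finset (Fin m))), (m - n) + 1 ≤ π.parts.card →
    (((((List.range m).drop (m - n)).map fun j => (1 : Matrix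
        (Finpartition (Finset.univ : Finset (Fin m)))
        (Finpartition (Finset.univ : Finset (Fin m))) ℝ)
          - eta N (j + 1) • resampS N m).prod).mulVec v) π = 0 := by
  intro n
  induction n with
  | zero =>
    intro _ v π hπ
    exfalso
    have h1 : π.parts.card ≤ m := by
      have := π.card_parts_le_card
      simpa using this
    omega
  | succ n ih =>
    intro hn v π hπ
    set t := m - (n + 1) with ht
    have htm : t < m := by omega
    have hdrop : (List.range m).drop t = t :: (List.range m).drop (t + 1) := by
      rw [List.drop_eq_getElem_cons (by simpa using htm)]
      simp
    rw [hdrop, List.map_cons, List.prod_cons, ← Matrix.mulVec_mulVec]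
    have hmn : m - n = t + 1 := by omega
    refine resamp_step N m (t + 1) (by omega) (by omega) _ (fun σ hσ => ?_) π (by omega)
    have ih' := ih (by omega) v σ
    rw [hmn] at ih'
    exact ih' (by omega)


/-- The `m`-step nonstationary bootstrap with step sizes `η_1, …, η_m` is exactly
unbiased on moment polynomials of order `m`:
`(∏_{i=1}^m (Id − η_i S)) (S f − f) = 0` for every coefficient vector `f`. -/
theorem nonstationary_bootstrap_unbiased (N m : ℕ) (hm : 1 ≤ m) (hN : m ≤ N)
    (f : Finpartition (Finset.univ : Finset (Fin m)) → ℝ) :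
    (((List.range m).map fun j => (1 : Matrix
        (Finpartition (Finset.univ : Finset (Fin m)))
        (Finpartition (Finset.univ : Finset (Fin m))) ℝ)
          - eta N (j + 1) • resampS N m).prod).mulVec
      ((resampS N m).mulVec f - f) = 0 := by
  funext π
  have h := resamp_main N m hm hN m le_rfl ((resampS N m).mulVec f - f) π ?_
  · simpa using h
  · have hne : (Finset.univ : Finset (Fin m)).Nonempty := by
      have : NeZero m := ⟨by omega⟩
      exact Finset.univ_nonempty
    have : π.parts.Nonempty := π.parts_nonempty hne.ne_empty
    have := this.card_pos
    omega
end
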